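/- arXiv:2208.07388 — 2 statements merged into one kernel-verified Lean document; each statement's English description precedes it below -/
import Mathlib

section
/- Let U and V be strongly continuous one-parameter unitary groups on the same Hilbert space L, and let C, D ≥ 0. If ‖U(t) − V(t)‖ ≤ C·t + D·t² for all positive t in some neighborhood of 0, then ‖U(t) − V(t)‖ ≤ C·|t| for all t ∈ ℝ. -/
/-!
Telescoping `aⁿ - bⁿ = a (aⁿ⁻¹ - bⁿ⁻¹) + (a - b) bⁿ⁻¹` with unitaries gives
`‖U(t) - V(t)‖ ≤ n ‖U(t/n) - V(t/n)‖ ≤ C t + D t² / n` for every large `n`; letting `n → ∞`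
removes the quadratic term. Negative times follow from `U(-t) = U(t)⋆`.
-/

open scoped ComplexConjugate

/-- A (strongly continuous) one-parameter unitary group on a complex Hilbert space `L`:
a homomorphism `ℝ → U(L)` that is continuous in the strong operator topology. -/
def IsOneParamUnitaryGroup {L : Type*} [NormedAddCommGroup L] [InnerProductSpace ℂ L]
    [CompleteSpace L] (U : ℝ → (L →L[ℂ] L)) : Prop :=
  U 0 = 1 ∧ (∀ s t : ℝ, U (s + t) = U s * U t) ∧
    (∀ t : ℝ, U t ∈ unitary (L →L[ℂ] L)) ∧ ∀ x : L, Continuous fun t : ℝ => U t x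

open Filter Topology

theorem norm_pow_sub_pow_le_of_mem_unitary {E : Type*} [NormedRing E] [StarRing E] [CStarRing E]
    {a b : E} (ha : a ∈ unitary E) (hb : b ∈ unitary E) (n : ℕ) :
    ‖a ^ n - b ^ n‖ ≤ n * ‖a - b‖ := by
  induction n with
  | zero => simp
  | succ n ih =>
    have htelescope : a ^ (n + 1) - b ^ (n + 1) = a * (a ^ n - b ^ n) + (a - b) * b ^ n := by
      rw [pow_succ', pow_succ']
      noncomm_ring
    calc ‖a ^ (n + 1) - b ^ (n + 1)‖
        ≤ ‖a * (a ^ n - b ^ n)‖ + ‖(a - b) * b ^ n‖ := htelescope ▸ norm_add_le _ _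
      _ = ‖a ^ n - b ^ n‖ + ‖a - b‖ := by
        rw [CStarRing.norm_mem_unitary_mul _ ha, CStarRing.norm_mul_mem_unitary _ (pow_mem hb n)]
      _ ≤ (n + 1 : ℕ) * ‖a - b‖ := by push_cast; linarith

theorem le_mul_of_nat_mul_le_of_le_mul_add_sq {f : ℝ → ℝ} {C D ε t : ℝ} (hε : 0 < ε)
    (hmul : ∀ (n : ℕ) (s : ℝ), 0 < s → f (n * s) ≤ n * f s)
    (hf : ∀ s, 0 < s → s < ε → f s ≤ C * s + D * s ^ 2) (ht : 0 < t) : f t ≤ C * t := by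
  have hlim : Tendsto (fun n : ℕ => C * t + D * t ^ 2 / n) atTop (𝓝 (C * t)) := by
    simpa using tendsto_const_nhds.add (tendsto_const_div_atTop_nhds_zero_nat (D * t ^ 2))
  refine ge_of_tendsto hlim ?_
  filter_upwards [tendsto_natCast_atTop_atTop.eventually_gt_atTop (t / ε)] with n hn
  have hn0 : (0 : ℝ) < n := (div_pos ht hε).trans hn
  have hs0 : 0 < t / n := div_pos ht hn0
  have hsε : t / n < ε := by rw [div_lt_iff₀ hn0]; rwa [div_lt_iff₀ hε, mul_comm] at hn
  calc f t = f (n * (t / n)) := by rw [mul_div_cancel₀ t hn0.ne']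
    _ ≤ n * f (t / n) := hmul n _ hs0
    _ ≤ n * (C * (t / n) + D * (t / n) ^ 2) := by gcongr; exact hf _ hs0 hsε
    _ = C * t + D * t ^ 2 / n := by field_simp

namespace IsOneParamUnitaryGroup

variable {L : Type*} [NormedAddCommGroup L] [InnerProductSpace ℂ L] [CompleteSpace L]
  {U V : ℝ → (L →L[ℂ] L)}

theorem map_zero (hU : IsOneParamUnitaryGroup U) : U 0 = 1 := hU.1

theorem map_add (hU : IsOneParamUnitaryGroup U) (s t : ℝ) : U (s + t) = U s * U t := hU.2.1 s t

theorem mem_unitary (hU : IsOneParamUnitaryGroup U) (t : ℝ) : U t ∈ unitary (L →L[ℂ] L) :=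
  hU.2.2.1 t

theorem map_natCast_mul (hU : IsOneParamUnitaryGroup U) (n : ℕ) (s : ℝ) :
    U (n * s) = U s ^ n := by
  induction n with
  | zero => simp [hU.map_zero]
  | succ n ih => rw [Nat.cast_succ, add_one_mul, hU.map_add, ih, pow_succ]

theorem map_neg (hU : IsOneParamUnitaryGroup U) (t : ℝ) : U (-t) = star (U t) := by
  calc U (-t) = star (U t) * U t * U (-t) := by
        rw [Unitary.star_mul_self_of_mem (hU.mem_unitary t), one_mul]
    _ = star (U t) := by rw [mul_assoc, ← hU.map_add, add_neg_cancel, hU.map_zero, mul_one]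

theorem norm_sub_natCast_mul_le (hU : IsOneParamUnitaryGroup U) (hV : IsOneParamUnitaryGroup V)
    (n : ℕ) (s : ℝ) : ‖U (n * s) - V (n * s)‖ ≤ n * ‖U s - V s‖ := by
  rw [hU.map_natCast_mul, hV.map_natCast_mul]
  exact norm_pow_sub_pow_le_of_mem_unitary (hU.mem_unitary s) (hV.mem_unitary s) n

theorem norm_sub_neg (hU : IsOneParamUnitaryGroup U) (hV : IsOneParamUnitaryGroup V) (t : ℝ) :
    ‖U (-t) - V (-t)‖ = ‖U t - V t‖ := by
  rw [hU.map_neg, hV.map_neg, ← star_sub, norm_star]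

end IsOneParamUnitaryGroup

theorem forget_second_order_term_general {L : Type*} [NormedAddCommGroup L] [InnerProductSpace ℂ L]
    [CompleteSpace L] (U V : ℝ → (L →L[ℂ] L))
    (hU : IsOneParamUnitaryGroup U) (hV : IsOneParamUnitaryGroup V)
    (C D : ℝ)
    (h : ∃ ε > (0 : ℝ), ∀ t : ℝ, 0 < t → t < ε → ‖U t - V t‖ ≤ C * t + D * t ^ 2) :
    ∀ t : ℝ, ‖U t - V t‖ ≤ C * |t| := by
  obtain ⟨ε, hε, hbound⟩ := h
  have hpos : ∀ t, 0 < t → ‖U t - V t‖ ≤ C * t := fun t ht =>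
    le_mul_of_nat_mul_le_of_le_mul_add_sq (f := fun t => ‖U t - V t‖) hε
      (fun n s _ => hU.norm_sub_natCast_mul_le hV n s) hbound ht
  intro t
  rcases lt_trichotomy t 0 with ht | rfl | ht
  · rw [← hU.norm_sub_neg hV, abs_of_neg ht]
    exact hpos _ (neg_pos.2 ht)
  · simp [hU.map_zero, hV.map_zero]
  · rw [abs_of_pos ht]
    exact hpos t ht

/-- If `‖U(t) − V(t)‖ ≤ C·t + D·t²` for all positive `t` in some neighborhood
of `0`, then `‖U(t) − V(t)‖ ≤ C·|t|` for all `t ∈ ℝ`. -/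
theorem forget_second_order_term {L : Type*} [NormedAddCommGroup L] [InnerProductSpace ℂ L]
    [CompleteSpace L] (U V : ℝ → (L →L[ℂ] L))
    (hU : IsOneParamUnitaryGroup U) (hV : IsOneParamUnitaryGroup V)
    (C D : ℝ) (hC : 0 ≤ C) (hD : 0 ≤ D)
    (h : ∃ ε > (0 : ℝ), ∀ t : ℝ, 0 < t → t < ε → ‖U t - V t‖ ≤ C * t + D * t ^ 2) :
    ∀ t : ℝ, ‖U t - V t‖ ≤ C * |t| :=
  forget_second_order_term_general U V hU hV C D h
end

section
/- The exponential vectors {e(x) : x ∈ H} form a linearly independent subset of the symmetric Fock space Γ(H): for distinct x₁, …, xₙ ∈ H, the vectors e(x₁), …, e(xₙ) are linearly independent. -/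
open scoped InnerProductSpace

/-!
The functionals `y ↦ ⟪e y, ·⟫` send `e (x i)` to the function `y ↦ exp ⟪y, x i⟫`, which is a
character of the additive group `H`. Distinct points give distinct characters, since
`exp ⟪x - x', x⟫ = exp ⟪x - x', x'⟫` forces `exp ‖x - x'‖² = 1`; and distinct characters are
linearly independent (Dedekind–Artin). Linear independence then pulls back along the functionals.
-/

namespace InnerProductSpace

variable {H : Type*} [NormedAddCommGroup H] [InnerProductSpace ℂ H]

noncomputable def expInnerChar (x : H) : Multiplicative H →* ℂ where
  toFun y := Complex.exp ⟪y.toAdd, x⟫_ℂ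
  map_one' := by simp
  map_mul' a b := by simp [Complex.exp_add]

@[simp]
lemma expInnerChar_apply (x : H) (y : Multiplicative H) :
    expInnerChar x y = Complex.exp ⟪y.toAdd, x⟫_ℂ :=
  rfl

lemma expInnerChar_injective : Function.Injective (expInnerChar (H := H)) := by
  intro x x' hxx'
  set v := x - x'
  have hexp : Complex.exp ⟪v, v⟫_ℂ = 1 := by
    have hv := DFunLike.congr_fun hxx' (Multiplicative.ofAdd v)
    simp only [expInnerChar_apply, toAdd_ofAdd] at hv
    rw [inner_sub_right, Complex.exp_sub, hv, div_self (Complex.exp_ne_zero _)]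
  have hnorm : Real.exp (‖v‖ ^ 2) = 1 := by
    simpa [Complex.norm_exp, ← inner_self_eq_norm_sq (𝕜 := ℂ)] using congrArg norm hexp
  rw [Real.exp_eq_one_iff, sq_eq_zero_iff, norm_eq_zero, sub_eq_zero] at hnorm
  exact hnorm

lemma linearIndependent_exp_inner {ι : Type*} {x : ι → H} (hx : Function.Injective x) :
    LinearIndependent ℂ fun i (y : H) => Complex.exp ⟪y, x i⟫_ℂ :=
  (linearIndependent_monoidHom (Multiplicative H) ℂ).comp _ (expInnerChar_injective.comp hx)

end InnerProductSpace

open InnerProductSpace in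
theorem exponential_vectors_linearIndependent_general {H : Type*} [NormedAddCommGroup H]
    [InnerProductSpace ℂ H] {Γ : Type*} [NormedAddCommGroup Γ] [InnerProductSpace ℂ Γ]
    (e : H → Γ)
    (he : ∀ x y : H, ⟪e x, e y⟫_ℂ = Complex.exp ⟪x, y⟫_ℂ)
    {n : ℕ} (x : Fin n → H) (hx : Function.Injective x) :
    LinearIndependent ℂ fun i : Fin n => e (x i) := by
  have hcomp : (LinearMap.pi fun y => innerₛₗ ℂ (e y)) ∘ (fun i => e (x i)) =
      fun i y => Complex.exp ⟪y, x i⟫_ℂ := by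
    funext i y
    simp [he]
  exact .of_comp _ (hcomp ▸ linearIndependent_exp_inner hx)

/-- The exponential vectors `e(x)`, `x ∈ H`, in the symmetric Fock space
`Γ(H)` are linearly independent: for distinct `x₁, …, xₙ` the vectors `e(x₁), …, e(xₙ)`
are linearly independent. The Fock space is encoded abstractly by a map `e : H → Γ`
satisfying the characteristic inner-product identity `⟨e(x), e(y)⟩ = exp ⟨x, y⟩`. -/
theorem exponential_vectors_linearIndependent {H : Type*} [NormedAddCommGroup H]
    [InnerProductSpace ℂ H] {Γ : Type*} [NormedAddCommGroup Γ] [InnerProductSpace ℂ Γ]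
    [CompleteSpace Γ] (e : H → Γ)
    (he : ∀ x y : H, ⟪e x, e y⟫_ℂ = Complex.exp ⟪x, y⟫_ℂ)
    {n : ℕ} (x : Fin n → H) (hx : Function.Injective x) :
    LinearIndependent ℂ fun i : Fin n => e (x i) :=
  exponential_vectors_linearIndependent_general e he x hx
end
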